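/- (Instance of Theorem 1: existence of the Stackelberg equilibrium in the interior-response regime.) Assume for every j that r_e·X_j/(e−1) < k_e^j < c_e·X_j·e/(e−1) and r_h·Y_j/(e−1) < k_h^j < c_h·Y_j·e/(e−1). Then there exists a strategy profile (p̃_e, p̃_h, (α_j, β_j)_{j=1..n}) with p̃_e ∈ [c_e, r_e], p̃_h ∈ [c_h, r_h], α_j = (1/X_j)·(k_e^j/p̃_e − 1/b_e^j) and β_j = (1/Y_j)·(k_h^j/p̃_h − 1/b_h^j), such that: (i) for every j, (α_j, β_j) ∈ (0,1) × (0,1) and U_j(p̃_e, p̃_h, α_j, β_j) ≥ U_j(p̃_e, p̃_h, α, β) for all (α,β) ∈ [0,1] × [0,1]; and (ii) V_e(p̃_e) ≥ V_e(p) for all p ∈ [c_e, r_e] and V_h(p̃_h) ≥ V_h(p) for all p ∈ [c_h, r_h]; i.e., no leader or follower can improve its utility or profit by a unilateral deviation. -/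

import Mathlib

/-!
Each follower's utility splits into one concave term per energy carrier,
`k log (1 + b Z α) + p Z (1 - α)`, whose stationary point `α* = (k/p - 1/b)/Z` is its global
maximum on `α ≥ 0` by the tangent-line bound `log x ≤ x - 1`; the bounds on `k` are exactly what
puts `α*` in `(0, 1)` for every price in the admissible interval. Each leader's profit is
continuous on the compact price interval, which lies in `p > 0`, so it attains its maximum there.
-/

/-- The utility of DES `j` given offered prices `p_e, p_h` and dispatching
factors `(α, β)`, with `b_e^j = (e−1)/X_j`, `b_h^j = (e−1)/Y_j`. -/
noncomputable def desU (Xj Yj kej khj C0j pe ph α β : ℝ) : ℝ :=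
  kej * Real.log (1 + ((Real.exp 1 - 1) / Xj) * Xj * α)
  + khj * Real.log (1 + ((Real.exp 1 - 1) / Yj) * Yj * β)
  + pe * Xj * (1 - α) + ph * Yj * (1 - β) - C0j

/-- An aggregator's profit in the interior-response regime:
`V(p) = (r − p)·Σ_j (Z_j + 1/b^j − k^j/p)` with `b^j = (e−1)/Z_j`. -/
noncomputable def aggV (n : ℕ) (Z k : Fin n → ℝ) (r p : ℝ) : ℝ :=
  (r - p) * ∑ j, (Z j + 1 / ((Real.exp 1 - 1) / Z j) - k j / p)

open Real Set

noncomputable def logUtility (b Z k p α : ℝ) : ℝ :=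
  k * log (1 + b * Z * α) + p * Z * (1 - α)

noncomputable def stationaryFactor (b Z k p : ℝ) : ℝ :=
  1 / Z * (k / p - 1 / b)

lemma desU_eq (Xj Yj kej khj C0j pe ph α β : ℝ) :
    desU Xj Yj kej khj C0j pe ph α β =
      logUtility ((exp 1 - 1) / Xj) Xj kej pe α + logUtility ((exp 1 - 1) / Yj) Yj khj ph β
        - C0j := by
  unfold desU logUtility
  ring

lemma logUtility_le_stationaryFactor {b Z k p α : ℝ} (hb : 0 < b) (hZ : 0 < Z) (hk : 0 < k)
    (hp : 0 < p) (hα : 0 ≤ α) :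
    logUtility b Z k p α ≤ logUtility b Z k p (stationaryFactor b Z k p) := by
  set a := stationaryFactor b Z k p
  have hs : 1 + b * Z * a = b * k / p := by
    simp only [a, stationaryFactor]
    field_simp
    ring
  have hs_pos : 0 < 1 + b * Z * a := by rw [hs]; positivity
  have ht_pos : 0 < 1 + b * Z * α := by positivity
  have htangent : log (1 + b * Z * α) - log (1 + b * Z * a)
      ≤ (1 + b * Z * α) / (1 + b * Z * a) - 1 := by
    rw [← log_div ht_pos.ne' hs_pos.ne']
    exact log_le_sub_one_of_pos (div_pos ht_pos hs_pos)
  have hs' : p * (1 + b * Z * a) = b * k := by rw [hs]; field_simp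
  have hslope : k * ((1 + b * Z * α) / (1 + b * Z * a) - 1) = p * Z * (α - a) := by
    rw [hs]
    field_simp
    linear_combination hs'
  unfold logUtility
  nlinarith [mul_le_mul_of_nonneg_left htangent hk.le]

lemma stationaryFactor_mem_Ioo {b Z k p : ℝ} (hb : 0 < b) (hZ : 0 < Z) (hp : 0 < p)
    (hlo : p / b < k) (hhi : k < p * (Z + 1 / b)) :
    stationaryFactor b Z k p ∈ Ioo 0 1 := by
  have hlo' : 1 / b < k / p := by
    rw [div_lt_div_iff₀ hb hp, one_mul]
    rwa [div_lt_iff₀ hb] at hlo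
  have hhi' : k / p < Z + 1 / b := by
    rwa [div_lt_iff₀ hp, mul_comm]
  unfold stationaryFactor
  constructor
  · exact mul_pos (by positivity) (sub_pos.2 hlo')
  · rw [one_div_mul_eq_div, div_lt_one hZ]
    linarith

lemma stationaryFactor_mem_Ioo_of_bounds {Z k c r p : ℝ} (hZ : 0 < Z) (hc : 0 < c)
    (hp : p ∈ Icc c r) (hlo : r * Z / (exp 1 - 1) < k)
    (hhi : k < c * Z * exp 1 / (exp 1 - 1)) :
    stationaryFactor ((exp 1 - 1) / Z) Z k p ∈ Ioo 0 1 := by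
  have hE : 0 < exp 1 - 1 := by linarith [add_one_lt_exp one_ne_zero]
  have hp_pos : 0 < p := hc.trans_le hp.1
  refine stationaryFactor_mem_Ioo (div_pos hE hZ) hZ hp_pos ?_ ?_
  · calc p / ((exp 1 - 1) / Z) = p * Z / (exp 1 - 1) := by field_simp
      _ ≤ r * Z / (exp 1 - 1) := by gcongr; exact hp.2
      _ < k := hlo
  · calc k < c * Z * exp 1 / (exp 1 - 1) := hhi
      _ ≤ p * Z * exp 1 / (exp 1 - 1) := by gcongr; exact hp.1
      _ = p * (Z + 1 / ((exp 1 - 1) / Z)) := by field_simp; ring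

lemma exists_isMaxOn_aggV (n : ℕ) (Z k : Fin n → ℝ) {c r : ℝ} (hc : 0 < c) (hcr : c ≤ r) :
    ∃ p ∈ Icc c r, IsMaxOn (aggV n Z k r) (Icc c r) p := by
  have hcont : ContinuousOn (aggV n Z k r) (Icc c r) := by
    unfold aggV
    refine (continuousOn_const.sub continuousOn_id).mul (continuousOn_finsetSum _ fun j _ => ?_)
    exact continuousOn_const.sub
      (continuousOn_const.div continuousOn_id fun p hp => (hc.trans_le hp.1).ne')
  exact isCompact_Icc.exists_isMaxOn (nonempty_Icc.2 hcr) hcont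

theorem stmt_16_general (n : ℕ) (X Y ke kh C0 : Fin n → ℝ)
    (hX : ∀ j, 0 < X j) (hY : ∀ j, 0 < Y j)
    (hke : ∀ j, 0 < ke j) (hkh : ∀ j, 0 < kh j)
    (ce re ch rh : ℝ) (hce : 0 < ce) (hcr : ce < re) (hch : 0 < ch) (hcr' : ch < rh)
    (hkeB : ∀ j, re * X j / (Real.exp 1 - 1) < ke j ∧
      ke j < ce * X j * Real.exp 1 / (Real.exp 1 - 1))
    (hkhB : ∀ j, rh * Y j / (Real.exp 1 - 1) < kh j ∧
      kh j < ch * Y j * Real.exp 1 / (Real.exp 1 - 1)) :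
    ∃ pte pth : ℝ, pte ∈ Set.Icc ce re ∧ pth ∈ Set.Icc ch rh ∧
      (∀ j : Fin n,
        (1 / X j) * (ke j / pte - 1 / ((Real.exp 1 - 1) / X j)) ∈ Set.Ioo (0:ℝ) 1 ∧
        (1 / Y j) * (kh j / pth - 1 / ((Real.exp 1 - 1) / Y j)) ∈ Set.Ioo (0:ℝ) 1 ∧
        ∀ α ∈ Set.Icc (0:ℝ) 1, ∀ β ∈ Set.Icc (0:ℝ) 1,
          desU (X j) (Y j) (ke j) (kh j) (C0 j) pte pth α β ≤
            desU (X j) (Y j) (ke j) (kh j) (C0 j) pte pth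
              ((1 / X j) * (ke j / pte - 1 / ((Real.exp 1 - 1) / X j)))
              ((1 / Y j) * (kh j / pth - 1 / ((Real.exp 1 - 1) / Y j)))) ∧
      (∀ p ∈ Set.Icc ce re, aggV n X ke re p ≤ aggV n X ke re pte) ∧
      (∀ p ∈ Set.Icc ch rh, aggV n Y kh rh p ≤ aggV n Y kh rh pth) := by
  have hE : 0 < exp 1 - 1 := by linarith [add_one_lt_exp one_ne_zero]
  obtain ⟨pte, hpte, hmax_e⟩ := exists_isMaxOn_aggV n X ke hce hcr.le
  obtain ⟨pth, hpth, hmax_h⟩ := exists_isMaxOn_aggV n Y kh hch hcr'.le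
  refine ⟨pte, pth, hpte, hpth, fun j => ⟨?_, ?_, fun α hα β hβ => ?_⟩,
    fun p hp => hmax_e hp, fun p hp => hmax_h hp⟩
  · exact stationaryFactor_mem_Ioo_of_bounds (hX j) hce hpte (hkeB j).1 (hkeB j).2
  · exact stationaryFactor_mem_Ioo_of_bounds (hY j) hch hpth (hkhB j).1 (hkhB j).2
  · rw [desU_eq, desU_eq]
    gcongr
    · exact logUtility_le_stationaryFactor (div_pos hE (hX j)) (hX j) (hke j)
        (hce.trans_le hpte.1) hα.1
    · exact logUtility_le_stationaryFactor (div_pos hE (hY j)) (hY j) (hkh j)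
        (hch.trans_le hpth.1) hβ.1

/-- Instance of Theorem 1: existence of a Stackelberg equilibrium in the
interior-response regime. There are prices `(p̃_e, p̃_h)` in the admissible
box and follower responses `(α_j, β_j)` given by the stationary dispatching
factors such that no leader or follower can improve by a unilateral
deviation. -/
theorem stmt_16 (n : ℕ) (hn : 1 ≤ n) (X Y ke kh C0 : Fin n → ℝ)
    (hX : ∀ j, 0 < X j) (hY : ∀ j, 0 < Y j)
    (hke : ∀ j, 0 < ke j) (hkh : ∀ j, 0 < kh j)
    (ce re ch rh : ℝ) (hce : 0 < ce) (hcr : ce < re) (hch : 0 < ch) (hcr' : ch < rh)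
    (hkeB : ∀ j, re * X j / (Real.exp 1 - 1) < ke j ∧
      ke j < ce * X j * Real.exp 1 / (Real.exp 1 - 1))
    (hkhB : ∀ j, rh * Y j / (Real.exp 1 - 1) < kh j ∧
      kh j < ch * Y j * Real.exp 1 / (Real.exp 1 - 1)) :
    ∃ pte pth : ℝ, pte ∈ Set.Icc ce re ∧ pth ∈ Set.Icc ch rh ∧
      (∀ j : Fin n,
        (1 / X j) * (ke j / pte - 1 / ((Real.exp 1 - 1) / X j)) ∈ Set.Ioo (0:ℝ) 1 ∧
        (1 / Y j) * (kh j / pth - 1 / ((Real.exp 1 - 1) / Y j)) ∈ Set.Ioo (0:ℝ) 1 ∧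
        ∀ α ∈ Set.Icc (0:ℝ) 1, ∀ β ∈ Set.Icc (0:ℝ) 1,
          desU (X j) (Y j) (ke j) (kh j) (C0 j) pte pth α β ≤
            desU (X j) (Y j) (ke j) (kh j) (C0 j) pte pth
              ((1 / X j) * (ke j / pte - 1 / ((Real.exp 1 - 1) / X j)))
              ((1 / Y j) * (kh j / pth - 1 / ((Real.exp 1 - 1) / Y j)))) ∧
      (∀ p ∈ Set.Icc ce re, aggV n X ke re p ≤ aggV n X ke re pte) ∧
      (∀ p ∈ Set.Icc ch rh, aggV n Y kh rh p ≤ aggV n Y kh rh pth) :=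
  stmt_16_general n X Y ke kh C0 hX hY hke hkh ce re ch rh hce hcr hch hcr' hkeB hkhB
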